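/- Define ψ(m,b,T) := Φ̄(m√T − b/√T) − e^{2bm} Φ̄(m√T + b/√T). For a∇b := (max(a,b)) ∧ 1, there exist universal constants C₁, C₂ > 0 such that for all m ≤ 0, b > 0, and T > 0, C₁ · ((|m·b|) ∇ (b/√T)) ≤ ψ(m,b,T) ≤ C₂ · ((|m·b|) ∇ (b/√T)). -/

import Mathlib

open MeasureTheory ProbabilityTheory Real Set

/-- The standard Gaussian tail function `Φ̄(s) = ∫_s^∞ (2π)^{-1/2} e^{-u²/2} du`. -/
noncomputable def gaussTail (s : ℝ) : ℝ :=
  ∫ u in Set.Ioi s, (Real.sqrt (2 * Real.pi))⁻¹ * Real.exp (-u ^ 2 / 2)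

/-- `ψ(m,b,T) = Φ̄(m√T − b/√T) − e^{2bm} Φ̄(m√T + b/√T)`. -/
noncomputable def psi (m b T : ℝ) : ℝ :=
  gaussTail (m * Real.sqrt T - b / Real.sqrt T)
    - Real.exp (2 * b * m) * gaussTail (m * Real.sqrt T + b / Real.sqrt T)

/-- `a ∇ b = min (max a b) 1`. -/
noncomputable def nabla (a b : ℝ) : ℝ := min (max a b) 1

/-!
The substitution `x = m√T`, `y = b/√T` turns `ψ(m,b,T)` into `ψ(x,y,1)` and `|m b|`
into `|x y|`. Split `ψ(x,y,1) = [Φ̄(x−y) − Φ̄(x+y)] + (1 − e^{2xy}) Φ̄(x+y)`: the first term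
is the Gaussian mass of `(x−y, x+y]`, at most `y`, the second is at most `2|xy|`, and
`ψ ≤ Φ̄(x−y) ≤ 1`. For the lower bound there are three regimes. If `|x|, y ≤ 1` the density
is `≥ 1/24` on the whole interval, so the mass is `≳ y`. If `x ≤ −max(1, y)` then
`Φ̄(x+y) ≥ 1/2` and, by convexity, `1 − e^{−2|xy|} ≳ min(|xy|, 1)`, with `|xy| ≥ y`.
Otherwise `(x−y, x+y]` contains `(−1, 0]`.
-/

open Filter

lemma gaussianPDFReal_zero_one (u : ℝ) :
    gaussianPDFReal 0 1 u = (√(2 * π))⁻¹ * exp (-u ^ 2 / 2) := by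
  simp [gaussianPDFReal]

lemma two_le_sqrt_two_mul_pi : 2 ≤ √(2 * π) :=
  le_sqrt_of_sq_le (by nlinarith [pi_gt_three])

lemma sqrt_two_mul_pi_le_three : √(2 * π) ≤ 3 :=
  sqrt_le_iff.2 ⟨by norm_num, by nlinarith [pi_lt_d2]⟩

lemma gaussianPDFReal_zero_one_le_half (u : ℝ) : gaussianPDFReal 0 1 u ≤ 1 / 2 := by
  rw [gaussianPDFReal_zero_one]
  calc (√(2 * π))⁻¹ * exp (-u ^ 2 / 2) ≤ (√(2 * π))⁻¹ :=
        mul_le_of_le_one_right (by positivity) (exp_le_one_iff.2 (by nlinarith [sq_nonneg u]))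
    _ ≤ 1 / 2 := by rw [one_div]; exact inv_anti₀ (by norm_num) two_le_sqrt_two_mul_pi

lemma exp_neg_div_two_div_three_le_gaussianPDFReal {u c : ℝ} (h : u ^ 2 ≤ c) :
    exp (-c / 2) / 3 ≤ gaussianPDFReal 0 1 u := by
  rw [gaussianPDFReal_zero_one, div_eq_inv_mul]
  gcongr
  exact sqrt_two_mul_pi_le_three

lemma gaussTail_eq_integral (s : ℝ) : gaussTail s = ∫ u in Ioi s, gaussianPDFReal 0 1 u := by
  simp only [gaussTail, gaussianPDFReal_zero_one]

lemma gaussTail_zero : gaussTail 0 = 1 / 2 := by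
  simp only [gaussTail, integral_const_mul]
  rw [show (fun u : ℝ => exp (-u ^ 2 / 2)) = fun u => exp (-(1 / 2) * u ^ 2) by ext; ring_nf,
    integral_gaussian_Ioi, show π / (1 / 2) = 2 * π by ring]
  field_simp

lemma gaussTail_nonneg (s : ℝ) : 0 ≤ gaussTail s := by
  rw [gaussTail_eq_integral]
  exact setIntegral_nonneg measurableSet_Ioi fun u _ => gaussianPDFReal_nonneg 0 1 u

lemma gaussTail_le_one (s : ℝ) : gaussTail s ≤ 1 := by
  rw [gaussTail_eq_integral, ← integral_gaussianPDFReal_eq_one 0 one_ne_zero]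
  exact setIntegral_le_integral (integrable_gaussianPDFReal 0 1)
    (Eventually.of_forall (gaussianPDFReal_nonneg 0 1))

lemma gaussTail_antitone : Antitone gaussTail := fun s t h => by
  simp only [gaussTail_eq_integral]
  exact setIntegral_mono_set (integrable_gaussianPDFReal 0 1).integrableOn
    (Eventually.of_forall (gaussianPDFReal_nonneg 0 1)) (Ioi_subset_Ioi h).eventuallyLE

lemma one_half_le_gaussTail {s : ℝ} (hs : s ≤ 0) : 1 / 2 ≤ gaussTail s :=
  gaussTail_zero ▸ gaussTail_antitone hs

lemma gaussTail_sub_gaussTail {s t : ℝ} (h : s ≤ t) :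
    gaussTail s - gaussTail t = ∫ u in Ioc s t, gaussianPDFReal 0 1 u := by
  rw [gaussTail_eq_integral, gaussTail_eq_integral, ← Ioc_union_Ioi_eq_Ioi h,
    setIntegral_union (Ioc_disjoint_Ioi le_rfl) measurableSet_Ioi
      (integrable_gaussianPDFReal 0 1).integrableOn (integrable_gaussianPDFReal 0 1).integrableOn]
  ring

lemma gaussTail_sub_gaussTail_le {s t : ℝ} (h : s ≤ t) :
    gaussTail s - gaussTail t ≤ (t - s) / 2 := by
  rw [gaussTail_sub_gaussTail h]
  calc ∫ u in Ioc s t, gaussianPDFReal 0 1 u ≤ ∫ _ in Ioc s t, (1 / 2 : ℝ) :=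
        setIntegral_mono_on (integrable_gaussianPDFReal 0 1).integrableOn
          (integrableOn_const (by simp)) measurableSet_Ioc
          fun u _ => gaussianPDFReal_zero_one_le_half u
    _ = (t - s) / 2 := by
        rw [setIntegral_const, Real.volume_real_Ioc, max_eq_left (by linarith), smul_eq_mul]
        ring

lemma mul_le_gaussTail_sub_gaussTail {s t c : ℝ} (h : s ≤ t)
    (hc : ∀ u ∈ Ioc s t, c ≤ gaussianPDFReal 0 1 u) :
    c * (t - s) ≤ gaussTail s - gaussTail t := by
  have := setIntegral_ge_of_const_le_real measurableSet_Ioc (by simp) hc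
    (integrable_gaussianPDFReal 0 1).integrableOn
  rwa [Real.volume_real_Ioc, max_eq_left (by linarith), ← gaussTail_sub_gaussTail h] at this

lemma one_sub_exp_neg_mul_min_le {k v : ℝ} (hk : 0 ≤ k) (hv : 0 ≤ v) :
    (1 - exp (-k)) * min v 1 ≤ 1 - exp (-(k * v)) := by
  rcases le_total v 1 with hv1 | hv1
  · rw [min_eq_left hv1]
    have hconv := convexOn_exp.2 (mem_univ (-k)) (mem_univ 0) hv (sub_nonneg.2 hv1) (by ring)
    simp only [smul_eq_mul, mul_zero, add_zero, exp_zero, mul_one] at hconv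
    rw [show v * -k = -(k * v) by ring] at hconv
    linarith
  · rw [min_eq_right hv1, mul_one]
    have : exp (-(k * v)) ≤ exp (-k) := exp_le_exp.2 (by nlinarith)
    linarith

lemma psi_eq_psi_one {m b T : ℝ} (hT : 0 < T) : psi m b T = psi (m * √T) (b / √T) 1 := by
  have hsT : √T ≠ 0 := (sqrt_pos.2 hT).ne'
  simp only [psi, sqrt_one, mul_one, div_one]
  congr 3
  field_simp

lemma psi_one_eq (x y : ℝ) :
    psi x y 1 =
      (gaussTail (x - y) - gaussTail (x + y)) + (1 - exp (2 * y * x)) * gaussTail (x + y) := by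
  simp only [psi, sqrt_one, mul_one, div_one]
  ring

section PsiOne

variable {x y : ℝ}

lemma psi_one_le_one : psi x y 1 ≤ 1 := by
  simp only [psi, sqrt_one, mul_one, div_one]
  linarith [gaussTail_le_one (x - y),
    mul_nonneg (exp_pos (2 * y * x)).le (gaussTail_nonneg (x + y))]

lemma psi_one_le_add (hx : x ≤ 0) (hy : 0 ≤ y) : psi x y 1 ≤ y + 2 * |x * y| := by
  have hI := gaussTail_sub_gaussTail_le (show x - y ≤ x + y by linarith)
  have hE : (1 - exp (2 * y * x)) * gaussTail (x + y) ≤ -(2 * y * x) :=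
    calc (1 - exp (2 * y * x)) * gaussTail (x + y) ≤ -(2 * y * x) * gaussTail (x + y) :=
          mul_le_mul_of_nonneg_right (by linarith [add_one_le_exp (2 * y * x)])
            (gaussTail_nonneg _)
      _ ≤ -(2 * y * x) := mul_le_of_le_one_right (by nlinarith) (gaussTail_le_one _)
  rw [psi_one_eq, abs_of_nonpos (mul_nonpos_of_nonpos_of_nonneg hx hy)]
  linarith

theorem psi_one_le_three_mul_nabla (hx : x ≤ 0) (hy : 0 ≤ y) :
    psi x y 1 ≤ 3 * nabla |x * y| y := by
  rw [nabla, mul_min_of_nonneg _ _ (by norm_num : (0 : ℝ) ≤ 3)]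
  refine le_min ?_ (by linarith [psi_one_le_one (x := x) (y := y)])
  linarith [psi_one_le_add hx hy, le_max_left |x * y| y, le_max_right |x * y| y]

lemma div_twelve_le_psi_one (hx : -1 ≤ x) (hx0 : x ≤ 0) (hy : 0 ≤ y) (hy1 : y ≤ 1) :
    y / 12 ≤ psi x y 1 := by
  have hexp : 1 / 8 ≤ exp (-2) := by
    rw [show (-2 : ℝ) = -1 + -1 by norm_num, exp_add]
    nlinarith [exp_neg_one_gt_d9]
  have hI := mul_le_gaussTail_sub_gaussTail (c := 1 / 24) (show x - y ≤ x + y by linarith)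
    fun u hu => by
      have := exp_neg_div_two_div_three_le_gaussianPDFReal (u := u) (c := 4)
        (by nlinarith [hu.1, hu.2])
      norm_num at this ⊢; linarith
  have hE : 0 ≤ (1 - exp (2 * y * x)) * gaussTail (x + y) :=
    mul_nonneg (sub_nonneg.2 (exp_le_one_iff.2 (by nlinarith))) (gaussTail_nonneg _)
  rw [psi_one_eq]
  linarith

lemma mul_min_le_psi_one (hx : x ≤ -1) (hxy : x + y ≤ 0) (hy : 0 ≤ y) :
    3 / 8 * min |x * y| 1 ≤ psi x y 1 := by
  have hexp : exp (-2) ≤ 1 / 4 := by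
    rw [show (-2 : ℝ) = -1 + -1 by norm_num, exp_add]
    nlinarith [exp_neg_one_lt_d9, exp_pos (-1)]
  have hxy0 : x * y ≤ 0 := by nlinarith
  have hE : 3 / 4 * min |x * y| 1 ≤ 1 - exp (2 * y * x) := by
    have hchord := one_sub_exp_neg_mul_min_le zero_le_two (abs_nonneg (x * y))
    rw [abs_of_nonpos hxy0, show -(2 * -(x * y)) = 2 * y * x by ring] at hchord
    rw [abs_of_nonpos hxy0]
    nlinarith [le_min (neg_nonneg.2 hxy0) zero_le_one]
  calc 3 / 8 * min |x * y| 1 = 3 / 4 * min |x * y| 1 * (1 / 2) := by ring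
    _ ≤ (1 - exp (2 * y * x)) * gaussTail (x + y) :=
        mul_le_mul hE (one_half_le_gaussTail hxy) (by norm_num)
          (sub_nonneg.2 (exp_le_one_iff.2 (by linarith)))
    _ ≤ psi x y 1 := by
        rw [psi_one_eq]
        linarith [gaussTail_antitone (show x - y ≤ x + y by linarith)]

lemma one_sixth_le_psi_one (hx : x ≤ 0) (hxy : 0 ≤ x + y) (hxy' : x - y ≤ -1) :
    1 / 6 ≤ psi x y 1 := by
  have hI := mul_le_gaussTail_sub_gaussTail (c := 1 / 6) (show (-1 : ℝ) ≤ 0 by norm_num)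
    fun u hu => by
      have := exp_neg_div_two_div_three_le_gaussianPDFReal (u := u) (c := 1)
        (by nlinarith [hu.1, hu.2])
      linarith [add_one_le_exp (-1 / 2)]
  have hleft := gaussTail_antitone hxy'
  have hright := gaussTail_antitone hxy
  have hE : 0 ≤ (1 - exp (2 * y * x)) * gaussTail (x + y) :=
    mul_nonneg (sub_nonneg.2 (exp_le_one_iff.2 (by nlinarith))) (gaussTail_nonneg _)
  rw [psi_one_eq]
  linarith

theorem nabla_div_twelve_le_psi_one (hx : x ≤ 0) (hy : 0 ≤ y) :
    nabla |x * y| y / 12 ≤ psi x y 1 := by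
  have habs : |x * y| = -x * y := by
    rw [abs_of_nonpos (mul_nonpos_of_nonpos_of_nonneg hx hy)]; ring
  have hnabla_le_one : nabla |x * y| y ≤ 1 := min_le_right _ _
  have hcentral (hx1 : -1 ≤ x) (hy1 : y ≤ 1) : nabla |x * y| y / 12 ≤ psi x y 1 := by
    have hnabla_le : nabla |x * y| y ≤ y :=
      (min_le_left _ _).trans (max_le (by rw [habs]; nlinarith) le_rfl)
    linarith [div_twelve_le_psi_one hx1 hx hy hy1]
  rcases le_total (x + y) 0 with hxy | hxy
  · rcases le_total x (-1) with hx1 | hx1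
    · have hnabla : nabla |x * y| y = min |x * y| 1 := by
        rw [nabla, max_eq_left (by rw [habs]; nlinarith)]
      have := mul_min_le_psi_one hx1 hxy hy
      rw [hnabla]
      linarith [le_min (abs_nonneg (x * y)) zero_le_one]
    · exact hcentral hx1 (by linarith)
  · rcases le_total 1 y with hy1 | hy1
    · linarith [one_sixth_le_psi_one hx hxy (by linarith)]
    · exact hcentral (by linarith) hy1

end PsiOne

/-- There are universal constants `C₁, C₂ > 0` such that for all `m ≤ 0`,
`b > 0`, `T > 0`, `C₁ (|m·b| ∇ (b/√T)) ≤ ψ(m,b,T) ≤ C₂ (|m·b| ∇ (b/√T))`. -/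
theorem psi_asymp_nonpos_slope :
    ∃ C₁ C₂ : ℝ, 0 < C₁ ∧ 0 < C₂ ∧
      ∀ m b T : ℝ, m ≤ 0 → 0 < b → 0 < T →
        C₁ * nabla |m * b| (b / Real.sqrt T) ≤ psi m b T ∧
          psi m b T ≤ C₂ * nabla |m * b| (b / Real.sqrt T) := by
  refine ⟨1 / 12, 3, by norm_num, by norm_num, fun m b T hm hb hT => ?_⟩
  have hsT : 0 < √T := sqrt_pos.2 hT
  have hx : m * √T ≤ 0 := mul_nonpos_of_nonpos_of_nonneg hm hsT.le
  have hy : 0 ≤ b / √T := div_nonneg hb.le hsT.le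
  have hmb : m * b = m * √T * (b / √T) := by field_simp
  rw [psi_eq_psi_one hT, hmb]
  exact ⟨by linarith [nabla_div_twelve_le_psi_one hx hy], psi_one_le_three_mul_nabla hx hy⟩
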